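/- arXiv:1601.07146 — 3 statements merged into one kernel-verified Lean document; each statement's English description precedes it below -/
import Mathlib

section
/- With notation as above (combinatorial galleries for a sequence of simple reflections), define the equivalence relation γ ∼_α δ iff γ_i = δ_i for all i with β_i(γ) ≠ ±α. Then the set M_α(γ) depends only on the ∼_α-equivalence class of γ; that is, if γ ∼_α δ then M_α(γ) = M_α(δ). -/
/-- The Weyl-group element of a combinatorial gallery entry: `s i` if the entry
is `true`, identity otherwise. -/
def galW {W : Type*} [Group W] {r : ℕ} (s : Fin r → W) (γ : Fin r → Bool) : Fin r → W :=
  fun i => cond (γ i) (s i) 1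

/-- The prefix product `γ^i = γ₁⋯γᵢ` of a combinatorial gallery. -/
def prefW {W : Type*} [Group W] {r : ℕ} (s : Fin r → W) (γ : Fin r → Bool) (i : ℕ) : W :=
  ((List.ofFn (galW s γ)).take i).prod

/-- The wall `β_i(γ) = γ^i(-α_i)` (here `i : Fin r` labels the `(i+1)`-st wall). -/
def wallβ {W V : Type*} [Group W] [AddCommGroup V] [DistribMulAction W V] {r : ℕ}
    (s : Fin r → W) (α : Fin r → V) (γ : Fin r → Bool) (i : Fin r) : V :=
  prefW s γ (i.1 + 1) • (-(α i))

/-- The wall `β̃_i(γ) = γ^{i-1}(-α_i)`. -/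
def wallβt {W V : Type*} [Group W] [AddCommGroup V] [DistribMulAction W V] {r : ℕ}
    (s : Fin r → W) (α : Fin r → V) (γ : Fin r → Bool) (i : Fin r) : V :=
  prefW s γ i.1 • (-(α i))

/-- `M_α(γ) = {i : β_i(γ) = ±α}`. -/
def Mset {W V : Type*} [Group W] [AddCommGroup V] [DistribMulAction W V] [DecidableEq V]
    {r : ℕ} (s : Fin r → W) (α : Fin r → V) (a : V) (γ : Fin r → Bool) : Finset (Fin r) :=
  Finset.univ.filter fun i => wallβ s α γ i = a ∨ wallβ s α γ i = -a

/-- `J_α(γ) = {i : β_i(γ) = α}`. -/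
def Jset {W V : Type*} [Group W] [AddCommGroup V] [DistribMulAction W V] [DecidableEq V]
    {r : ℕ} (s : Fin r → W) (α : Fin r → V) (a : V) (γ : Fin r → Bool) : Finset (Fin r) :=
  Finset.univ.filter fun i => wallβ s α γ i = a

/-- `D_α(γ) = {i : β̃_i(γ) = α}`. -/
def Dset {W V : Type*} [Group W] [AddCommGroup V] [DistribMulAction W V] [DecidableEq V]
    {r : ℕ} (s : Fin r → W) (α : Fin r → V) (a : V) (γ : Fin r → Bool) : Finset (Fin r) :=
  Finset.univ.filter fun i => wallβt s α γ i = a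


/-- The equivalence relation `∼_α`: `γ ∼_α δ` iff `γ_i = δ_i` unless `β_i(γ) = ±α`. -/
def simRel {W V : Type*} [Group W] [AddCommGroup V] [DistribMulAction W V]
    {r : ℕ} (s : Fin r → W) (α : Fin r → V) (a : V) (γ δ : Fin r → Bool) : Prop :=
  ∀ i : Fin r, (wallβ s α γ i ≠ a ∧ wallβ s α γ i ≠ -a) → γ i = δ i


/-! Changing the letter of a gallery at an index `i` with `β_i(γ) = ±α` multiplies the prefix
`γ^{i+1}` on the right by `s_i`, and `γ^{i+1} s_i = s_{β_i(γ)} γ^{i+1} = s_α γ^{i+1}`. Hence, for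
`γ ∼_α δ`, every prefix `δ^j` acts on each vector as some power of `s_α` after `γ^j`. In particular
`β_i(δ)` lies in the `⟨s_α⟩`-orbit of `β_i(γ)`, and `{α, -α}` is a union of such orbits. -/

open MulAction Pointwise

section Galleries

variable {W V : Type*} [Group W] [AddCommGroup V] [DistribMulAction W V] {r : ℕ}
  {s : Fin r → W}

theorem prefW_succ (η : Fin r → Bool) (i : Fin r) :
    prefW s η (i.1 + 1) = prefW s η i * galW s η i := by
  rw [prefW, prefW, List.take_add_one, List.prod_append,
    List.getElem?_eq_getElem (by simp), List.getElem_ofFn]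
  simp

theorem galW_eq_mul_of_ne (hinv : ∀ i, s i * s i = 1) {γ δ : Fin r → Bool} {i : Fin r}
    (h : γ i ≠ δ i) : galW s δ i = galW s γ i * s i := by
  cases hγ : γ i <;> cases hδ : δ i <;> simp_all [galW]

theorem prefW_succ_mul_eq_sref_mul {α : Fin r → V} {a : V} {sref : V → W}
    (hsi : ∀ i, s i = sref (α i)) (hneg : ∀ v : V, sref (-v) = sref v)
    (hconj : ∀ (w : W) (v : V), sref (w • v) = w * sref v * w⁻¹)
    {γ : Fin r → Bool} {i : Fin r} (hwall : wallβ s α γ i = a ∨ wallβ s α γ i = -a) :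
    prefW s γ (i.1 + 1) * s i = sref a * prefW s γ (i.1 + 1) := by
  have hsref : sref (prefW s γ (i.1 + 1) • α i) = sref a := by
    have : prefW s γ (i.1 + 1) • α i = -wallβ s α γ i := by simp [wallβ]
    rcases hwall with hwall | hwall <;> simp [this, hwall, hneg]
  rw [← hsref, hconj, hsi]
  group

theorem prefW_smul_mem_orbit {α : Fin r → V} {a : V} {sref : V → W}
    (hinv : ∀ i, s i * s i = 1) (hsi : ∀ i, s i = sref (α i))
    (hneg : ∀ v : V, sref (-v) = sref v)
    (hconj : ∀ (w : W) (v : V), sref (w • v) = w * sref v * w⁻¹)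
    {γ δ : Fin r → Bool} (h : simRel s α a γ δ) :
    ∀ j ≤ r, ∀ v : V,
      prefW s δ j • v ∈ orbit (Subgroup.zpowers (sref a)) (prefW s γ j • v)
  | 0, _, v => by simp [prefW, mem_orbit_self]
  | j + 1, hj, v => by
    set i : Fin r := ⟨j, hj⟩
    have ih := prefW_smul_mem_orbit hinv hsi hneg hconj h j (by omega)
    rw [show j + 1 = i.1 + 1 from rfl, prefW_succ δ, mul_smul]
    by_cases hi : γ i = δ i
    · rw [show galW s δ i = galW s γ i by simp [galW, hi], prefW_succ γ, mul_smul]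
      exact ih _
    · have hwall : wallβ s α γ i = a ∨ wallβ s α γ i = -a := by
        by_contra hc
        exact hi (h i (not_or.mp hc))
      have hstep : prefW s γ i • galW s γ i • s i • v = sref a • prefW s γ (i.1 + 1) • v := by
        rw [← mul_smul, ← mul_smul, ← mul_smul, ← prefW_succ,
          prefW_succ_mul_eq_sref_mul hsi hneg hconj hwall]
      have := ih (galW s γ i • s i • v)
      rwa [galW_eq_mul_of_ne hinv hi, mul_smul, ← orbit_smul
        (⟨sref a, Subgroup.mem_zpowers _⟩ : Subgroup.zpowers (sref a)), Subgroup.smul_def,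
        ← hstep]

end Galleries

theorem mem_pair_neg_iff_of_mem_orbit {W V : Type*} [Group W] [AddCommGroup V]
    [DistribMulAction W V] {g : W} {a x y : V} (hg : g • a = -a)
    (hy : y ∈ orbit (Subgroup.zpowers g) x) :
    y ∈ ({a, -a} : Set V) ↔ x ∈ ({a, -a} : Set V) := by
  have hstab : Subgroup.zpowers g ≤ stabilizer W ({a, -a} : Set V) := by
    rw [Subgroup.zpowers_le, mem_stabilizer_iff, Set.smul_set_insert, Set.smul_set_singleton,
      smul_neg, hg, neg_neg, Set.pair_comm]
  obtain ⟨⟨k, hk⟩, rfl⟩ := mem_orbit_iff.mp hy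
  change k • x ∈ _ ↔ _
  rw [← Set.smul_mem_smul_set_iff (a := k) (x := x), mem_stabilizer_iff.mp (hstab hk)]

theorem stmt4_general {W V : Type*} [Group W] [AddCommGroup V] [DistribMulAction W V] [DecidableEq V]
    {r : ℕ} (s : Fin r → W) (α : Fin r → V) (a : V) (sref : V → W)
    (hinv : ∀ i, s i * s i = 1)
    (hsi : ∀ i, s i = sref (α i))
    (hsa : sref a • a = -a)
    (hneg : ∀ v : V, sref (-v) = sref v)
    (hconj : ∀ (w : W) (v : V), sref (w • v) = w * sref v * w⁻¹)
    (γ δ : Fin r → Bool) (h : simRel s α a γ δ) :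
    Mset s α a γ = Mset s α a δ := by
  ext i
  have hwall : wallβ s α δ i ∈ orbit (Subgroup.zpowers (sref a)) (wallβ s α γ i) :=
    prefW_smul_mem_orbit hinv hsi hneg hconj h (i.1 + 1) i.2 _
  simpa [Mset] using (mem_pair_neg_iff_of_mem_orbit hsa hwall).symm

/-- The set `M_α(γ)` only depends on the `∼_α`-equivalence class of `γ`. -/
theorem stmt4 {W V : Type*} [Group W] [AddCommGroup V] [DistribMulAction W V] [DecidableEq V]
    {r : ℕ} (s : Fin r → W) (α : Fin r → V) (a : V) (sref : V → W)
    (hinv : ∀ i, s i * s i = 1)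
    (hsi : ∀ i, s i = sref (α i))
    (hsa : sref a • a = -a)
    (hinvol : ∀ v : V, sref a • sref a • v = v)
    (hneg : ∀ v : V, sref (-v) = sref v)
    (hconj : ∀ (w : W) (v : V), sref (w • v) = w * sref v * w⁻¹)
    (γ δ : Fin r → Bool) (h : simRel s α a γ δ) :
    Mset s α a γ = Mset s α a δ :=
  stmt4_general s α a sref hinv hsi hsa hneg hconj γ δ h
end

section
/- Let Γ²_ℓ = {(δ₁,...,δ_ℓ) : δ_i ∈ {e, s}} be the set of combinatorial galleries of length ℓ for the Weyl group W = {e, s} of type A₁, with J(δ) = {j : δ₁⋯δ_j = s}. Let M_α(γ) = {i₁ < ⋯ < i_ℓ} for a gallery γ in a larger Weyl group and positive root α, and define the embedding of index sets i_J = {i_j : j ∈ J} for J ⊆ {1,...,ℓ}. Define v(δ) ∈ Γ by replacing, in the minimal representative γ_min of the ∼_α-class of γ, the entries at positions in M_α(γ) so that the prefix products get multiplied on the left by s_α exactly at the positions i_j with j ∈ J(δ). Then J_α(v(δ)) = i_{J(δ)} for every δ ∈ Γ²_ℓ. -/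
/-- The prefix product of a rank-one (type `A₁`) gallery `ε` of length `ℓ`, recorded as
a parity: `sPref ε p = true` iff `ε¹⋯ε^p = s`, i.e. iff the number of entries equal to
`s` among the first `p` entries is odd. -/
def sPref {ℓ : ℕ} (ε : Fin ℓ → Bool) (p : ℕ) : Bool :=
  decide (Odd ((Finset.univ.filter fun j : Fin ℓ => j.1 < p ∧ ε j = true)).card)

/-! On the walls of `γ_min` indexed by `M_α(γ_min)` the wall is `-α` (never `α`, as
`J_α(γ_min) = ∅`), and elsewhere it is not `±α`. Left multiplication of the prefix
products by `s_α` turns `-α` into `α` and never produces `α` from anything else, so the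
`i`-th wall of `v(ε)` is `α` exactly when `i = i_j ∈ M_α(γ_min)` and the prefix product
`g_j` equals `s_α`; strict monotonicity of `j ↦ i_j` says that exactly `j` walls of
`M_α(γ_min)` lie at or before `i_j`, so `g_j` is the parity of the `j`-th prefix of `ε`. -/

theorem wallβ_eq_smul_of_prefW_eq_mul {W V : Type*} [Group W] [AddCommGroup V]
    [DistribMulAction W V] {r : ℕ} (s : Fin r → W) (α : Fin r → V) {γ δ : Fin r → Bool}
    (i : Fin r) (g : W) (h : prefW s δ (i.1 + 1) = g * prefW s γ (i.1 + 1)) :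
    wallβ s α δ i = g • wallβ s α γ i := by
  rw [wallβ, wallβ, h, mul_smul]

theorem cond_smul_eq_iff_of_ne {W V : Type*} [Group W] [AddCommGroup V]
    [DistribMulAction W V] {t : W} {a x : V} (hta : t • a = -a) (hinvol : t • t • x = x)
    (hx : x ≠ a) (b : Bool) :
    cond b t 1 • x = a ↔ x = -a ∧ b = true := by
  cases b with
  | false =>
    simp only [cond_false, one_smul, Bool.false_eq_true, and_false, iff_false]
    exact hx
  | true =>
    simp only [cond_true, and_true]
    constructor
    · intro h
      rw [← hinvol, h, hta]
    · rintro rfl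
      rw [smul_neg, hta, neg_neg]

theorem card_filter_le_of_strictMono {α : Type*} [Preorder α] [DecidableLE α] {ℓ : ℕ} {m : Fin ℓ → α}
    (hm : StrictMono m) (j : Fin ℓ) :
    (Finset.univ.filter fun k => m k ≤ m j).card = j.1 + 1 := by
  simp only [hm.le_iff_le]
  rw [← Fin.card_Iic]
  congr 1
  ext k
  simp

theorem stmt9_general {W V : Type*} [Group W] [AddCommGroup V] [DistribMulAction W V] [DecidableEq V]
    {r : ℕ} (s : Fin r → W) (α : Fin r → V) (a : V) (sref : V → W)
    (hsa : sref a • a = -a)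
    (hinvol : ∀ v : V, sref a • sref a • v = v)
    (γmin : Fin r → Bool) (hmin : Jset s α a γmin = ∅)
    {ℓ : ℕ} (m : Fin ℓ → Fin r) (hmono : StrictMono m)
    (hrange : Finset.univ.image m = Mset s α a γmin)
    (ε : Fin ℓ → Bool) (v : Fin r → Bool)
    (hv : ∀ p : ℕ, p ≤ r →
      prefW s v p =
        (cond (sPref ε ((Finset.univ.filter fun j : Fin ℓ => (m j).1 + 1 ≤ p).card))
          (sref a) 1) * prefW s γmin p) :
    Jset s α a v =
      (Finset.univ.filter fun j : Fin ℓ => sPref ε (j.1 + 1) = true).image m := by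
  have hJmin : ∀ i, wallβ s α γmin i ≠ a := by
    simpa [Jset, Finset.filter_eq_empty_iff] using hmin
  have hcount : ∀ j, (Finset.univ.filter fun k : Fin ℓ => (m k).1 + 1 ≤ (m j).1 + 1).card
      = j.1 + 1 := by
    simpa only [Nat.add_le_add_iff_right, Fin.val_fin_le] using
      card_filter_le_of_strictMono hmono
  have hmemM : ∀ i, i ∈ Mset s α a γmin ↔ ∃ j, m j = i := by
    simp [← hrange]
  ext i
  simp only [Jset, Finset.mem_filter, Finset.mem_univ, true_and, Finset.mem_image]
  rw [wallβ_eq_smul_of_prefW_eq_mul s α i _ (hv _ i.2),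
    cond_smul_eq_iff_of_ne hsa (hinvol _) (hJmin i)]
  constructor
  · rintro ⟨hwall, hpar⟩
    obtain ⟨j, rfl⟩ := (hmemM i).1 (by simp [Mset, hwall])
    exact ⟨j, hcount j ▸ hpar, rfl⟩
  · rintro ⟨j, hpar, rfl⟩
    have hM := (hmemM (m j)).2 ⟨j, rfl⟩
    simp only [Mset, Finset.mem_filter, Finset.mem_univ, true_and] at hM
    exact ⟨hM.resolve_left (hJmin _), (hcount j).symm ▸ hpar⟩

/-- Equation (11) of the paper: under Härterich's parametrization `v = v^α_γ ∘ ι` of the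
`∼_α`-equivalence class of `γ` by rank-one galleries `ε` of length `ℓ = |M_α(γ)|`
(the prefix products of `v` are `g_{k(p)}·γ_min^p` where `g_j = s_α` iff the `j`-th
prefix of `ε` equals `s`, and `k(p)` counts the walls `i_j ≤ p`), one has
`J_α(v(ε)) = i_{J(ε)}`, the image of `J(ε)` under the enumeration `m` of `M_α(γ_min)`. -/
theorem stmt9 {W V : Type*} [Group W] [AddCommGroup V] [DistribMulAction W V] [DecidableEq V]
    {r : ℕ} (s : Fin r → W) (α : Fin r → V) (a : V) (sref : V → W)
    (hinv : ∀ i, s i * s i = 1)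
    (hsi : ∀ i, s i = sref (α i))
    (hsa : sref a • a = -a)
    (hinvol : ∀ v : V, sref a • sref a • v = v)
    (hneg : ∀ v : V, sref (-v) = sref v)
    (hconj : ∀ (w : W) (v : V), sref (w • v) = w * sref v * w⁻¹)
    (γmin : Fin r → Bool) (hmin : Jset s α a γmin = ∅)
    {ℓ : ℕ} (m : Fin ℓ → Fin r) (hmono : StrictMono m)
    (hrange : Finset.univ.image m = Mset s α a γmin)
    (ε : Fin ℓ → Bool) (v : Fin r → Bool)
    (hsim : simRel s α a γmin v)
    (hv : ∀ p : ℕ, p ≤ r →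
      prefW s v p =
        (cond (sPref ε ((Finset.univ.filter fun j : Fin ℓ => (m j).1 + 1 ≤ p).card))
          (sref a) 1) * prefW s γmin p) :
    Jset s α a v =
      (Finset.univ.filter fun j : Fin ℓ => sPref ε (j.1 + 1) = true).image m :=
  stmt9_general s α a sref hsa hinvol γmin hmin m hmono hrange ε v hv
end

section
/- Let S be a commutative graded ring, Γ a finite set, and let H = Map(Γ, S) with pointwise operations. Fix r > 0 and elements β_r(γ) ∈ S for each γ ∈ Γ indexed via Γ = Γ' × {e, t} (t a formal second value). Define Δ : Map(Γ', S) → Map(Γ, S) by (Δf')(γ', ε) = f'(γ') and ∇_t : Map(Γ', S) → Map(Γ, S) by (∇_t f')(γ', ε) = β_r(γ', ε)·f'(γ') if ε = t and 0 otherwise. Then Δ and ∇_t are S-linear maps, and if B' is an S-linearly independent subset of Map(Γ', S) and all β_r(γ', t) are non-zero-divisors in S, then Δ(B') ∪ ∇_t(B') is S-linearly independent in Map(Γ, S). -/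
/-- The copy operator `Δ : Map(Γ', S) → Map(Γ' × {e,t}, S)`, `(Δf)(γ', ε) = f(γ')`. -/
def copyOp {S : Type*} {Γ' : Type*} (f : Γ' → S) : Γ' × Bool → S :=
  fun p => f p.1

/-- The concentration operator `∇_t`, `(∇_t f)(γ', ε) = β(γ', t)·f(γ')` if `ε = t`
(encoded as `true`) and `0` otherwise. -/
def concOp {S : Type*} [Mul S] [Zero S] {Γ' : Type*} (β : Γ' × Bool → S) (f : Γ' → S) :
    Γ' × Bool → S :=
  fun p => if p.2 = true then β (p.1, true) * f p.1 else 0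

/-!
Both operators are injective `S`-linear maps: `Δ` because it is precomposition with the
surjection `Prod.fst`, `∇_t` because the `β(γ', t)` are non-zero-divisors. Their images meet
only in `0`, since functions in the image of `∇_t` vanish on `Γ' × {e}` while `Δf` restricts
there to `f`. Injective linear maps with independent images carry a linearly independent
family `B'` to the linearly independent family `Δ(B') ∪ ∇_t(B')`.
-/

theorem LinearIndependent.sum_elim_comp_of_disjoint_range {ι ι' R M N : Type*} [Ring R]
    [AddCommGroup M] [Module R M] [AddCommGroup N] [Module R N] {v : ι → M} {w : ι' → M}
    (hv : LinearIndependent R v) (hw : LinearIndependent R w) {f g : M →ₗ[R] N}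
    (hf : LinearMap.ker f = ⊥) (hg : LinearMap.ker g = ⊥)
    (hfg : Disjoint (LinearMap.range f) (LinearMap.range g)) :
    LinearIndependent R (Sum.elim (f ∘ v) (g ∘ w)) := by
  refine (hv.map' f hf).sum_type (hw.map' g hg) (hfg.mono ?_ ?_) <;>
    exact Submodule.span_le.2 (Set.range_comp_subset_range _ _)

section Operators

variable {S Γ' : Type*} [CommSemiring S]

variable (S Γ') in
def copyLinearMap : (Γ' → S) →ₗ[S] (Γ' × Bool → S) :=
  LinearMap.funLeft S S Prod.fst

@[simp]
theorem copyLinearMap_apply (f : Γ' → S) : copyLinearMap S Γ' f = copyOp f :=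
  rfl

def concLinearMap (β : Γ' × Bool → S) : (Γ' → S) →ₗ[S] (Γ' × Bool → S) where
  toFun := concOp β
  map_add' f g := by
    funext p
    simp only [concOp, Pi.add_apply]
    split_ifs <;> simp [mul_add]
  map_smul' c f := by
    funext p
    simp only [concOp, Pi.smul_apply, smul_eq_mul, RingHom.id_apply]
    split_ifs <;> simp [mul_left_comm]

@[simp]
theorem concLinearMap_apply (β : Γ' × Bool → S) (f : Γ' → S) :
    concLinearMap β f = concOp β f :=
  rfl

theorem ker_copyLinearMap : LinearMap.ker (copyLinearMap S Γ') = ⊥ :=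
  LinearMap.ker_eq_bot_of_injective <|
    LinearMap.funLeft_injective_of_surjective S S _ Prod.fst_surjective

theorem ker_concLinearMap {β : Γ' × Bool → S} (hβ : ∀ g : Γ', β (g, true) ∈ nonZeroDivisors S) :
    LinearMap.ker (concLinearMap β) = ⊥ := by
  refine LinearMap.ker_eq_bot'.2 fun f hf => funext fun x => ?_
  have hx : β (x, true) * f x = 0 := by simpa [concOp] using congrFun hf (x, true)
  exact (hβ x).2 (f x) (by rwa [mul_comm] at hx)

theorem disjoint_range_copyLinearMap_concLinearMap (β : Γ' × Bool → S) :
    Disjoint (LinearMap.range (copyLinearMap S Γ')) (LinearMap.range (concLinearMap β)) := by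
  rw [Submodule.disjoint_def]
  rintro _ ⟨f, rfl⟩ ⟨g, hg⟩
  have hf : f = 0 := funext fun x => by simpa [copyOp, concOp] using (congrFun hg (x, false)).symm
  rw [hf, map_zero]

end Operators

/-- The operators of copy and concentration are `S`-linear, and they transform an
`S`-linearly independent family `B'` of functions on `Γ'` into the `S`-linearly
independent family `Δ(B') ∪ ∇_t(B')` of functions on `Γ = Γ' × {e,t}`, provided all the
elements `β(γ', t)` are non-zero-divisors of `S`. -/
theorem stmt11 {S : Type*} [CommRing S] {Γ' : Type*} (β : Γ' × Bool → S)
    (hβ : ∀ g : Γ', β (g, true) ∈ nonZeroDivisors S)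
    (B' : Set (Γ' → S))
    (hB' : LinearIndependent S (fun b : B' => (b : Γ' → S))) :
    (∀ (c : S) (f g : Γ' → S), copyOp (c • f + g) = c • copyOp f + copyOp g) ∧
    (∀ (c : S) (f g : Γ' → S), concOp β (c • f + g) = c • concOp β f + concOp β g) ∧
    LinearIndependent S
      (Sum.elim (fun b : B' => copyOp (b : Γ' → S))
        (fun b : B' => concOp β (b : Γ' → S))) := by
  refine ⟨fun c f g => ?_, fun c f g => ?_, ?_⟩
  · simp only [← copyLinearMap_apply, map_add, map_smul]
  · simp only [← concLinearMap_apply, map_add, map_smul]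
  · have := hB'.sum_elim_comp_of_disjoint_range hB' ker_copyLinearMap (ker_concLinearMap hβ)
      (disjoint_range_copyLinearMap_concLinearMap β)
    exact this
end
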